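/- Let X be a real L×N matrix, M, M̄ real L×K matrices, and A, Ā real K×N matrices with all entries of A and Ā nonnegative. Let H be a real K×N matrix, ξ > 0 and λ ≥ 0, and define the smoothed sparsity penalty P_ξ(A) = ∑_{k,n} (A_{kn} + ξ)^{1 - H_{kn}} (real powers). Set E = X - M·A and Ē = X - M̄·Ā, and assume every row e^l of E satisfies ‖e^l‖₂ > 0. If ∑_{l=1}^{L} ‖ē^l‖₂²/(2‖e^l‖₂) + λ·P_ξ(Ā) ≤ ∑_{l=1}^{L} ‖e^l‖₂²/(2‖e^l‖₂) + λ·P_ξ(A), then ‖X - M̄·Ā‖_{2,1} + λ·P_ξ(Ā) ≤ ‖X - M·A‖_{2,1} + λ·P_ξ(A). -/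
import Mathlib


open Matrix BigOperators

/-- Euclidean norm of the l-th row of a real L×N matrix. -/
noncomputable def rowNorm {L N : ℕ} (E : Matrix (Fin L) (Fin N) ℝ) (l : Fin L) : ℝ :=
  Real.sqrt (∑ n, (E l n) ^ 2)

/-- The ℓ_{2,1}-norm of a real L×N matrix: the sum of the Euclidean norms of its rows. -/
noncomputable def l21Norm {L N : ℕ} (E : Matrix (Fin L) (Fin N) ℝ) : ℝ :=
  ∑ l, rowNorm E l

/-- The smoothed sparsity penalty P_ξ(A) = ∑_{k,n} (A_{kn} + ξ)^(1 - H_{kn}). -/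
noncomputable def penalty {K N : ℕ} (H A : Matrix (Fin K) (Fin N) ℝ) (ξ : ℝ) : ℝ :=
  ∑ k, ∑ n, (A k n + ξ) ^ (1 - H k n)

/-- core reduction in the proof of Theorem 2 of the paper. -/
theorem stmt_2 {L N K : ℕ} (X : Matrix (Fin L) (Fin N) ℝ)
    (M Mbar : Matrix (Fin L) (Fin K) ℝ) (A Abar : Matrix (Fin K) (Fin N) ℝ)
    (hA : ∀ k n, 0 ≤ A k n) (hAbar : ∀ k n, 0 ≤ Abar k n)
    (H : Matrix (Fin K) (Fin N) ℝ) (ξ : ℝ) (hξ : 0 < ξ) (lam : ℝ) (hlam : 0 ≤ lam)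
    (hE : ∀ l, 0 < rowNorm (X - M * A) l)
    (hyp : ∑ l, (rowNorm (X - Mbar * Abar) l) ^ 2 / (2 * rowNorm (X - M * A) l)
            + lam * penalty H Abar ξ
          ≤ ∑ l, (rowNorm (X - M * A) l) ^ 2 / (2 * rowNorm (X - M * A) l)
            + lam * penalty H A ξ) :
    l21Norm (X - Mbar * Abar) + lam * penalty H Abar ξ ≤
      l21Norm (X - M * A) + lam * penalty H A ξ := by
  set e := fun l => rowNorm (X - M * A) l with he
  set f := fun l => rowNorm (X - Mbar * Abar) l with hf
  have hf0 : ∀ l, 0 ≤ f l := fun l => Real.sqrt_nonneg _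
  -- key pointwise inequality: f l ≤ f l ^2 / (2 e l) + e l / 2
  have key : ∀ l, f l ≤ f l ^ 2 / (2 * e l) + e l / 2 := by
    intro l
    have hel := hE l
    rw [div_add' _ _ _ (by positivity), le_div_iff₀ (by positivity)]
    nlinarith [sq_nonneg (e l - f l)]
  have hE2 : ∀ l, e l ^ 2 / (2 * e l) = e l / 2 := by
    intro l
    have := (hE l).ne'
    field_simp
  have h1 : l21Norm (X - Mbar * Abar) ≤ (∑ l, f l ^ 2 / (2 * e l)) + ∑ l, e l / 2 := by
    rw [l21Norm, ← Finset.sum_add_distrib]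
    exact Finset.sum_le_sum fun l _ => key l
  have h2 : l21Norm (X - M * A) = (∑ l, e l ^ 2 / (2 * e l)) + ∑ l, e l / 2 := by
    rw [l21Norm, ← Finset.sum_add_distrib]
    refine Finset.sum_congr rfl fun l _ => ?_
    rw [hE2 l]; ring
  linarith [hyp]
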